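/- arXiv:1301.7464 — 3 statements merged into one kernel-verified Lean document; each statement's English description precedes it below -/
import Mathlib

section
/- Fix n ≥ 1 and an integer M ≥ 2. Let C_1, …, C_M be independent 𝒳^n-valued random vectors, each with i.i.d. coordinates of law P_X, and conditionally on C_1 = (x_1,…,x_n) let Y_1,…,Y_n be independent with Y_k distributed as W(·|x_k), with (C_2,…,C_M) independent of (C_1, Y^n). For x^n ∈ 𝒳^n, y^n ∈ 𝒴^n write i(x^n;y^n) = Σ_{k=1}^n i(x_k;y_k) and define g(x^n,y^n) = Σ_{x̄^n ∈ 𝒳^n} (∏_{k=1}^n P_X(x̄_k)) · 1{i(x̄^n;y^n) ≥ i(x^n;y^n)}. Then P[∃ j ∈ {2,…,M} : i(C_j;Y^n) ≥ i(C_1;Y^n)] ≤ E[min{1, (M−1)·g(C_1, Y^n)}] (the random coding union bound). -/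
open MeasureTheory ProbabilityTheory
open scoped Classical

/-- Output marginal `P_Y(y) = Σ_x P_X(x) W(y|x)`. -/
noncomputable def outDist {𝒳 𝒴 : Type*} [Fintype 𝒳] (pX : 𝒳 → ℝ) (W : 𝒳 → 𝒴 → ℝ)
    (y : 𝒴) : ℝ := ∑ x, pX x * W x y

/-- Information density `i(x;y) = log (W(y|x) / P_Y(y))`. -/
noncomputable def infoDen {𝒳 𝒴 : Type*} [Fintype 𝒳] (pX : 𝒳 → ℝ) (W : 𝒳 → 𝒴 → ℝ)
    (x : 𝒳) (y : 𝒴) : ℝ := Real.log (W x y / outDist pX W y)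

/-!
Condition on `(C₁, Yⁿ) = (x, y)`. The competing codewords are independent of this pair, so the
conditional probability that some `C_j`, `j ≠ 1`, scores at least `i(x;y)` is the unconditional
probability of that event with `(x, y)` frozen. It is at most `1` and, by the union bound over
the `M - 1` competitors each of law `P_Xⁿ`, at most `(M - 1) g(x, y)`; averaging over
`(C₁, Yⁿ)` gives the bound.
-/

section
variable {Ω α β : Type*} [MeasurableSpace Ω] {μ : Measure Ω}
  [Fintype α] [MeasurableSpace α] [MeasurableSingletonClass α]

lemma integral_comp_eq_sum_measureReal_preimage [IsFiniteMeasure μ] {G : Ω → α}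
    (hG : Measurable G) (h : α → ℝ) :
    ∫ ω, h (G ω) ∂μ = ∑ a, μ.real (G ⁻¹' {a}) * h a := by
  rw [← integral_map hG.aemeasurable (measurable_of_finite h).aestronglyMeasurable,
    integral_fintype .of_finite]
  simp [map_measureReal_apply hG (measurableSet_singleton _)]

lemma ProbabilityTheory.IndepFun.measureReal_setOf_mem_eq_sum [IsFiniteMeasure μ]
    [MeasurableSpace β] {G : Ω → α} {D : Ω → β}
    (hG : Measurable G) (hD : Measurable D) (hGD : IndepFun G D μ)
    {E : α → Set β} (hE : ∀ a, MeasurableSet (E a)) :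
    μ.real {ω | D ω ∈ E (G ω)} = ∑ a, μ.real (G ⁻¹' {a}) * μ.real (D ⁻¹' E a) := by
  have hsplit : {ω | D ω ∈ E (G ω)} = ⋃ a ∈ Finset.univ, G ⁻¹' {a} ∩ D ⁻¹' E a := by
    ext ω; simp
  rw [hsplit, measureReal_biUnion_finset]
  · refine Finset.sum_congr rfl fun a _ => ?_
    simp only [measureReal_def, hGD.measure_inter_preimage_eq_mul _ _
      (measurableSet_singleton a) (hE a), ENNReal.toReal_mul]
  · exact fun a _ b _ hab => ((Set.disjoint_singleton.mpr hab).preimage G).mono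
      Set.inter_subset_left Set.inter_subset_left
  · exact fun a _ => (hG (measurableSet_singleton a)).inter (hD (hE a))

theorem ProbabilityTheory.IndepFun.measureReal_exists_mem_le_integral_min
    [IsProbabilityMeasure μ] [MeasurableSpace β] {J : Type*} [Fintype J]
    {G : Ω → α} {D : Ω → J → β} (hG : Measurable G)
    (hD : ∀ j, Measurable fun ω => D ω j) (hGD : IndepFun G D μ)
    {B : α → Set β} (hB : ∀ a, MeasurableSet (B a)) :
    μ.real {ω | ∃ j, D ω j ∈ B (G ω)}
      ≤ ∫ ω, min 1 (∑ j, μ.real {ω' | D ω' j ∈ B (G ω)}) ∂μ := by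
  have hE : ∀ a, MeasurableSet {c : J → β | ∃ j, c j ∈ B a} := fun a => by
    rw [Set.ofPred_exists]; exact .iUnion fun j => measurable_pi_apply j (hB a)
  refine (hGD.measureReal_setOf_mem_eq_sum hG (measurable_pi_lambda _ hD) hE).trans_le ?_
  rw [integral_comp_eq_sum_measureReal_preimage hG
      (fun a => min 1 (∑ j, μ.real {ω' | D ω' j ∈ B a}))]
  gcongr with a
  rw [show D ⁻¹' {c | ∃ j, c j ∈ B a} = ⋃ j, {ω | D ω j ∈ B a} by ext; simp]
  exact le_min measureReal_le_one (measureReal_iUnion_fintype_le _)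

end

lemma measureReal_setOf_eq_sum_of_law {Ω V : Type*} [MeasurableSpace Ω] {μ : Measure Ω}
    [Fintype V] [MeasurableSpace V] [MeasurableSingletonClass V] {X : Ω → V} (hX : Measurable X)
    {p : V → ℝ} (hp : ∀ v, 0 ≤ p v) (hlaw : ∀ v, μ {ω | X ω = v} = ENNReal.ofReal (p v))
    (P : V → Prop) [DecidablePred P] :
    μ.real {ω | P (X ω)} = ∑ v, p v * if P v then 1 else 0 := by
  have hfiber : ∀ v, μ.real (X ⁻¹' {v}) = p v := fun v => by
    simp only [measureReal_def, Set.preimage, Set.mem_singleton_iff, hlaw v,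
      ENNReal.toReal_ofReal (hp v)]
  calc μ.real {ω | P (X ω)} = ∑ v ∈ Finset.univ.filter P, μ.real (X ⁻¹' {v}) := by
        rw [sum_measureReal_preimage_singleton _ (fun v _ => hX (measurableSet_singleton v))
          (fun v _ => by simp [Set.preimage, hlaw])]
        simp
    _ = ∑ v, p v * if P v then 1 else 0 := by simp [hfiber, Finset.sum_filter]

theorem stmt2_general {𝒳 𝒴 : Type*} [Fintype 𝒳] [Fintype 𝒴]
    [MeasurableSpace 𝒳] [DiscreteMeasurableSpace 𝒳]
    [MeasurableSpace 𝒴] [DiscreteMeasurableSpace 𝒴]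
    (pX : 𝒳 → ℝ) (hpXpos : ∀ x, 0 < pX x)
    (W : 𝒳 → 𝒴 → ℝ)
    {Ω : Type*} [MeasurableSpace Ω] (μ : Measure Ω) [IsProbabilityMeasure μ]
    (n M : ℕ) [NeZero M]
    (C : Fin M → Ω → (Fin n → 𝒳)) (Y : Ω → Fin n → 𝒴)
    (hCm : ∀ j, Measurable (C j)) (hYm : Measurable Y)
    -- each codeword has i.i.d. coordinates of law `P_X`:
    (hClaw : ∀ j v, μ {ω | C j ω = v} = ENNReal.ofReal (∏ k, pX (v k)))
    -- `(C₂,…,C_M)` is independent of `(C₁, Yⁿ)`: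
    (hcross : IndepFun (fun ω => (C 0 ω, Y ω))
        (fun ω (j : {j : Fin M // j ≠ 0}) => C j.1 ω) μ) :
    (μ {ω | ∃ j : Fin M, j ≠ 0 ∧
        (∑ k, infoDen pX W (C 0 ω k) (Y ω k)) ≤ ∑ k, infoDen pX W (C j ω k) (Y ω k)}).toReal
      ≤ ∫ ω, min 1 ((M - 1 : ℝ) *
          ∑ xbar : Fin n → 𝒳, (∏ k, pX (xbar k)) *
            (if (∑ k, infoDen pX W (C 0 ω k) (Y ω k))
                ≤ ∑ k, infoDen pX W (xbar k) (Y ω k) then (1 : ℝ) else 0)) ∂μ := by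
  let score (x : Fin n → 𝒳) (y : Fin n → 𝒴) : ℝ := ∑ k, infoDen pX W (x k) (y k)
  have hcard : (Fintype.card {j : Fin M // j ≠ 0} : ℝ) = M - 1 := by
    rw [Fintype.card_subtype_compl, Fintype.card_subtype_eq, Fintype.card_fin,
      Nat.cast_sub NeZero.one_le, Nat.cast_one]
  have hevent : {ω | ∃ j : Fin M, j ≠ 0 ∧ score (C 0 ω) (Y ω) ≤ score (C j ω) (Y ω)}
      = {ω | ∃ j : {j : Fin M // j ≠ 0}, score (C 0 ω) (Y ω) ≤ score (C j ω) (Y ω)} := by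
    simp only [Subtype.exists, exists_prop]
  have hrcu := hcross.measureReal_exists_mem_le_integral_min ((hCm 0).prodMk hYm)
    (fun j : {j : Fin M // j ≠ 0} => hCm j.1) (B := fun a => {x | score a.1 a.2 ≤ score x a.2})
    (fun _ => (Set.to_countable _).measurableSet)
  rw [← measureReal_def]
  refine (hevent ▸ hrcu).trans_eq (integral_congr_ae (ae_of_all _ fun ω => ?_))
  dsimp only
  rw [Finset.sum_congr rfl fun j _ => measureReal_setOf_eq_sum_of_law (hCm j.1)
    (fun x => Finset.prod_nonneg fun k _ => (hpXpos (x k)).le) (hClaw j.1)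
    (fun x => score (C 0 ω) (Y ω) ≤ score x (Y ω)), Finset.sum_const, Finset.card_univ,
    nsmul_eq_mul, hcard]

/-- random coding union bound.  With `M ≥ 2` independent random
codewords `C₁, …, C_M` (here indexed by `Fin M`, with `C₁` the codeword of index `0`),
each with i.i.d. coordinates of law `P_X`, and `Y₁,…,Yₙ` the output of the channel with
input `C₁`, independent of the other codewords, one has
`P[∃ j ≠ 1, i(C_j;Yⁿ) ≥ i(C₁;Yⁿ)] ≤ E[min{1, (M−1)·g(C₁, Yⁿ)}]`. -/
theorem stmt2 {𝒳 𝒴 : Type*} [Fintype 𝒳] [Nonempty 𝒳] [Fintype 𝒴] [Nonempty 𝒴]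
    [MeasurableSpace 𝒳] [DiscreteMeasurableSpace 𝒳]
    [MeasurableSpace 𝒴] [DiscreteMeasurableSpace 𝒴]
    (pX : 𝒳 → ℝ) (hpXpos : ∀ x, 0 < pX x) (hpXsum : ∑ x, pX x = 1)
    (W : 𝒳 → 𝒴 → ℝ) (hWpos : ∀ x y, 0 < W x y) (hWsum : ∀ x, ∑ y, W x y = 1)
    {Ω : Type*} [MeasurableSpace Ω] (μ : Measure Ω) [IsProbabilityMeasure μ]
    (n M : ℕ) (hn : 1 ≤ n) (hM : 2 ≤ M) [NeZero M]
    (C : Fin M → Ω → (Fin n → 𝒳)) (Y : Ω → Fin n → 𝒴)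
    (hCm : ∀ j, Measurable (C j)) (hYm : Measurable Y)
    -- each codeword has i.i.d. coordinates of law `P_X`:
    (hClaw : ∀ j v, μ {ω | C j ω = v} = ENNReal.ofReal (∏ k, pX (v k)))
    -- conditionally on `C₁ = (x₁,…,xₙ)`, the `Y_k` are independent with law `W(·|x_k)`:
    (hC1Ylaw : ∀ v w, μ {ω | C 0 ω = v ∧ Y ω = w}
        = ENNReal.ofReal ((∏ k, pX (v k)) * ∏ k, W (v k) (w k)))
    -- `C₁, …, C_M` are independent:
    (hCindep : iIndepFun C μ)
    -- `(C₂,…,C_M)` is independent of `(C₁, Yⁿ)`: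
    (hcross : IndepFun (fun ω => (C 0 ω, Y ω))
        (fun ω (j : {j : Fin M // j ≠ 0}) => C j.1 ω) μ) :
    (μ {ω | ∃ j : Fin M, j ≠ 0 ∧
        (∑ k, infoDen pX W (C 0 ω k) (Y ω k)) ≤ ∑ k, infoDen pX W (C j ω k) (Y ω k)}).toReal
      ≤ ∫ ω, min 1 ((M - 1 : ℝ) *
          ∑ xbar : Fin n → 𝒳, (∏ k, pX (xbar k)) *
            (if (∑ k, infoDen pX W (C 0 ω k) (Y ω k))
                ≤ ∑ k, infoDen pX W (xbar k) (Y ω k) then (1 : ℝ) else 0)) ∂μ :=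
  stmt2_general pX hpXpos W μ n M C Y hCm hYm hClaw hcross
end

section
/- For every n ≥ 1 and every real M ≥ 1, defining g(x^n,y^n) = Σ_{x̄^n ∈ 𝒳^n} (∏_{k=1}^n P_X(x̄_k)) · 1{i(x̄^n;y^n) ≥ i(x^n;y^n)} where i(x^n;y^n) = Σ_{k=1}^n i(x_k;y_k), one has E[min{1, (M−1)·g((X_1,…,X_n),(Y_1,…,Y_n))}] ≤ E[exp(−[S_n − log M]^+)]. -/
open MeasureTheory ProbabilityTheory
open scoped Classical

/-!
Pointwise in `yⁿ`, the weights `∏ₖ P_X(x̄ₖ) exp i(x̄ₖ;yₖ) = ∏ₖ P_X(x̄ₖ) W(yₖ|x̄ₖ) / P_Y(yₖ)` form a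
probability distribution on `𝒳ⁿ`, so a Chernoff bound gives `g(xⁿ,yⁿ) ≤ exp(−i(xⁿ;yⁿ))`. Hence
`min{1, (M−1) g} ≤ min{1, M exp(−i)} = exp(−[i − log M]⁺)` for every outcome, and the expectations
compare.
-/

lemma sum_mul_indicator_le_exp_neg_mul_sum_exp {α : Type*} (s : Finset α) (p f : α → ℝ)
    (hp : ∀ a ∈ s, 0 ≤ p a) (t : ℝ) :
    ∑ a ∈ s, p a * (if t ≤ f a then (1 : ℝ) else 0)
      ≤ Real.exp (-t) * ∑ a ∈ s, p a * Real.exp (f a) := by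
  rw [Finset.mul_sum]
  refine Finset.sum_le_sum fun a ha => ?_
  rw [mul_left_comm, ← Real.exp_add]
  gcongr
  · exact hp a ha
  · split_ifs with h
    · exact Real.one_le_exp (by linarith)
    · exact (Real.exp_pos _).le

section ChannelDensities

variable {𝒳 𝒴 : Type*} [Fintype 𝒳] {pX : 𝒳 → ℝ} {W : 𝒳 → 𝒴 → ℝ}

lemma outDist_pos [Nonempty 𝒳] (hpX : ∀ x, 0 < pX x) (hW : ∀ x y, 0 < W x y) (y : 𝒴) :
    0 < outDist pX W y :=
  Finset.sum_pos (fun x _ => mul_pos (hpX x) (hW x y)) Finset.univ_nonempty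

lemma exp_infoDen [Nonempty 𝒳] (hpX : ∀ x, 0 < pX x) (hW : ∀ x y, 0 < W x y) (x : 𝒳) (y : 𝒴) :
    Real.exp (infoDen pX W x y) = W x y / outDist pX W y :=
  Real.exp_log (div_pos (hW x y) (outDist_pos hpX hW y))

lemma sum_mul_exp_infoDen [Nonempty 𝒳] (hpX : ∀ x, 0 < pX x) (hW : ∀ x y, 0 < W x y)
    (y : 𝒴) : ∑ x, pX x * Real.exp (infoDen pX W x y) = 1 := by
  simp_rw [exp_infoDen hpX hW, mul_div_assoc', ← Finset.sum_div]
  exact div_self (outDist_pos hpX hW y).ne'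

lemma sum_prod_mul_exp_sum_infoDen [Nonempty 𝒳] (hpX : ∀ x, 0 < pX x)
    (hW : ∀ x y, 0 < W x y) {n : ℕ} (y : Fin n → 𝒴) :
    ∑ xbar : Fin n → 𝒳, (∏ k, pX (xbar k)) * Real.exp (∑ k, infoDen pX W (xbar k) (y k)) = 1 := by
  simp_rw [Real.exp_sum, ← Finset.prod_mul_distrib]
  rw [← Fintype.prod_sum (fun k x => pX x * Real.exp (infoDen pX W x (y k)))]
  exact Finset.prod_eq_one fun k _ => sum_mul_exp_infoDen hpX hW (y k)

lemma sum_prod_mul_indicator_infoDen_le_exp_neg [Nonempty 𝒳] (hpX : ∀ x, 0 < pX x)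
    (hW : ∀ x y, 0 < W x y) {n : ℕ} (y : Fin n → 𝒴) (t : ℝ) :
    ∑ xbar : Fin n → 𝒳, (∏ k, pX (xbar k)) *
        (if t ≤ ∑ k, infoDen pX W (xbar k) (y k) then (1 : ℝ) else 0) ≤ Real.exp (-t) := by
  refine (sum_mul_indicator_le_exp_neg_mul_sum_exp _ _ _
    (fun xbar _ => Finset.prod_nonneg fun k _ => (hpX _).le) t).trans_eq ?_
  rw [sum_prod_mul_exp_sum_infoDen hpX hW, mul_one]

end ChannelDensities

lemma exp_neg_max_sub_log_zero {M : ℝ} (hM : 0 < M) (S : ℝ) :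
    Real.exp (-max (S - Real.log M) 0) = min 1 (M * Real.exp (-S)) := by
  rw [← min_neg_neg, Real.exp_monotone.map_min, neg_zero, Real.exp_zero, neg_sub,
    Real.exp_sub, Real.exp_log hM, div_eq_mul_inv, ← Real.exp_neg, min_comm]

lemma min_one_sub_one_mul_le_exp_neg_max {M g S : ℝ} (hM : 1 ≤ M) (hg₀ : 0 ≤ g)
    (hg : g ≤ Real.exp (-S)) :
    min 1 ((M - 1) * g) ≤ Real.exp (-max (S - Real.log M) 0) := by
  rw [exp_neg_max_sub_log_zero (by linarith) S]
  exact min_le_min le_rfl (by nlinarith)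

theorem stmt3_general {𝒳 𝒴 : Type*} [Fintype 𝒳] [Nonempty 𝒳] [Fintype 𝒴]
    [MeasurableSpace 𝒳] [DiscreteMeasurableSpace 𝒳]
    [MeasurableSpace 𝒴] [DiscreteMeasurableSpace 𝒴]
    (pX : 𝒳 → ℝ) (hpXpos : ∀ x, 0 < pX x)
    (W : 𝒳 → 𝒴 → ℝ) (hWpos : ∀ x y, 0 < W x y)
    {Ω : Type*} [MeasurableSpace Ω] (μ : Measure Ω) [IsProbabilityMeasure μ]
    (X : ℕ → Ω → 𝒳) (Y : ℕ → Ω → 𝒴)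
    (hXm : ∀ k, Measurable (X k)) (hYm : ∀ k, Measurable (Y k))
    (n : ℕ) (M : ℝ) (hM : 1 ≤ M) :
    ∫ ω, min 1 ((M - 1) *
        ∑ xbar : Fin n → 𝒳, (∏ k, pX (xbar k)) *
          (if (∑ k : Fin n, infoDen pX W (X k.1 ω) (Y k.1 ω))
              ≤ ∑ k : Fin n, infoDen pX W (xbar k) (Y k.1 ω) then (1 : ℝ) else 0)) ∂μ
      ≤ ∫ ω, Real.exp (-(max ((∑ k ∈ Finset.range n, infoDen pX W (X k ω) (Y k ω))
          - Real.log M) 0)) ∂μ := by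
  have hg₀ (ω : Ω) : 0 ≤ ∑ xbar : Fin n → 𝒳, (∏ k, pX (xbar k)) *
      (if (∑ k : Fin n, infoDen pX W (X k.1 ω) (Y k.1 ω))
        ≤ ∑ k : Fin n, infoDen pX W (xbar k) (Y k.1 ω) then (1 : ℝ) else 0) :=
    Finset.sum_nonneg fun xbar _ =>
      mul_nonneg (Finset.prod_nonneg fun k _ => (hpXpos _).le) (by positivity)
  have hS_meas : Measurable fun ω => ∑ k ∈ Finset.range n, infoDen pX W (X k ω) (Y k ω) :=
    Finset.measurable_sum _ fun k _ =>
      (Measurable.of_discrete (f := fun p : 𝒳 × 𝒴 => infoDen pX W p.1 p.2)).comp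
        ((hXm k).prodMk (hYm k))
  refine integral_mono_of_nonneg (.of_forall fun ω => le_min zero_le_one
    (mul_nonneg (by linarith) (hg₀ ω))) ?_ (.of_forall fun ω => ?_)
  · refine (integrable_const 1).mono'
      ((hS_meas.sub_const _).max measurable_const).neg.exp.aestronglyMeasurable (.of_forall ?_)
    intro ω
    rw [Real.norm_of_nonneg (Real.exp_pos _).le, Real.exp_le_one_iff, neg_nonpos]
    exact le_max_right _ _
  · dsimp only
    rw [Finset.sum_range]
    exact min_one_sub_one_mul_le_exp_neg_max hM (hg₀ ω)
      (sum_prod_mul_indicator_infoDen_le_exp_neg hpXpos hWpos (fun k => Y k.1 ω) _)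

/-- For every `n ≥ 1` and every real `M ≥ 1`, with
`g(xⁿ,yⁿ) = Σ_{x̄ⁿ} (∏ₖ P_X(x̄ₖ)) 1{i(x̄ⁿ;yⁿ) ≥ i(xⁿ;yⁿ)}`, one has
`E[min{1, (M−1)·g(Xⁿ,Yⁿ)}] ≤ E[exp(−[Sₙ − log M]⁺)]`. -/
theorem stmt3 {𝒳 𝒴 : Type*} [Fintype 𝒳] [Nonempty 𝒳] [Fintype 𝒴] [Nonempty 𝒴]
    [MeasurableSpace 𝒳] [DiscreteMeasurableSpace 𝒳]
    [MeasurableSpace 𝒴] [DiscreteMeasurableSpace 𝒴]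
    (pX : 𝒳 → ℝ) (hpXpos : ∀ x, 0 < pX x) (hpXsum : ∑ x, pX x = 1)
    (W : 𝒳 → 𝒴 → ℝ) (hWpos : ∀ x y, 0 < W x y) (hWsum : ∀ x, ∑ y, W x y = 1)
    {Ω : Type*} [MeasurableSpace Ω] (μ : Measure Ω) [IsProbabilityMeasure μ]
    (X : ℕ → Ω → 𝒳) (Y : ℕ → Ω → 𝒴)
    (hXm : ∀ k, Measurable (X k)) (hYm : ∀ k, Measurable (Y k))
    -- `((X_k, Y_k))_k` is an i.i.d. sequence with law `P_{XY}`: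
    (hXYindep : iIndepFun (fun k ω => (X k ω, Y k ω)) μ)
    (hXYlaw : ∀ k x y, μ {ω | X k ω = x ∧ Y k ω = y} = ENNReal.ofReal (pX x * W x y))
    (n : ℕ) (hn : 1 ≤ n) (M : ℝ) (hM : 1 ≤ M) :
    ∫ ω, min 1 ((M - 1) *
        ∑ xbar : Fin n → 𝒳, (∏ k, pX (xbar k)) *
          (if (∑ k : Fin n, infoDen pX W (X k.1 ω) (Y k.1 ω))
              ≤ ∑ k : Fin n, infoDen pX W (xbar k) (Y k.1 ω) then (1 : ℝ) else 0)) ∂μ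
      ≤ ∫ ω, Real.exp (-(max ((∑ k ∈ Finset.range n, infoDen pX W (X k ω) (Y k ω))
          - Real.log M) 0)) ∂μ :=
  stmt3_general pX hpXpos W hWpos μ X Y hXm hYm n M hM
end

section
/- For every real γ ≥ 0 and every integer N ≥ 1, the truncated hitting time τ' = min( inf{n ≥ 1 : S_n ≥ γ}, N ) satisfies E[τ'] ≤ (γ + B)/C. -/
/-!
Wald's identity: with `C = E[i(X;Y)]`, the process `Sₙ - n C` is a martingale for the filtration
generated by `S₀, …, Sₙ`, and the truncated hitting time `τ'` is a bounded stopping time for it.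
Optional stopping gives `E[S_τ'] = C E[τ']`. Since `S` is still below `γ` one step before `τ'`
and every increment is at most `B`, `S_τ' ≤ γ + B`, whence `C E[τ'] ≤ γ + B`.
-/

open MeasureTheory ProbabilityTheory

namespace MeasureTheory

section OptionalStopping

variable {Ω : Type*} {mΩ : MeasurableSpace Ω} {μ : Measure Ω} {𝒢 : Filtration ℕ mΩ}

theorem Martingale.integral_stoppedValue_eq [SigmaFiniteFiltration μ 𝒢] {M : ℕ → Ω → ℝ}
    (hM : Martingale M 𝒢 μ) {τ : Ω → ℕ∞} (hτ : IsStoppingTime 𝒢 τ) {N : ℕ}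
    (hbdd : ∀ ω, τ ω ≤ N) : μ[stoppedValue M τ] = μ[M 0] := by
  have hmono {M : ℕ → Ω → ℝ} (hM : Martingale M 𝒢 μ) : μ[M 0] ≤ μ[stoppedValue M τ] :=
    hM.submartingale.expected_stoppedValue_mono (isStoppingTime_const 𝒢 0) hτ
      (fun _ => bot_le) hbdd
  have hneg : μ[-M 0] ≤ μ[-stoppedValue M τ] := hmono hM.neg
  rw [integral_neg', integral_neg', neg_le_neg_iff] at hneg
  exact le_antisymm hneg (hmono hM)

variable {f : ℕ → Ω → ℝ}

theorem martingale_sum_range_sub_integral [IsProbabilityMeasure μ]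
    (hadapt : ∀ n, StronglyMeasurable[𝒢 (n + 1)] (f n))
    (hindep : ∀ n, Indep (MeasurableSpace.comap (f n) inferInstance) (𝒢 n) μ)
    (hint : ∀ n, Integrable (f n) μ) :
    Martingale (fun n ω => ∑ k ∈ Finset.range n, (f k ω - μ[f k])) 𝒢 μ := by
  refine martingale_of_condExp_sub_eq_zero_nat (fun n => ?_) (fun n => ?_) (fun n => ?_)
  · refine Finset.stronglyMeasurable_fun_sum _ fun k hk => .sub ?_ stronglyMeasurable_const
    exact StronglyMeasurable.mono (hadapt k) (𝒢.mono (Finset.mem_range.mp hk))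
  · exact integrable_finsetSum _ fun k _ => (hint k).sub (integrable_const _)
  · have hincr : (fun ω => ∑ k ∈ Finset.range (n + 1), (f k ω - μ[f k]))
        - (fun ω => ∑ k ∈ Finset.range n, (f k ω - μ[f k])) = fun ω => f n ω - μ[f n] := by
      ext ω
      simp only [Pi.sub_apply, Finset.sum_range_succ, add_sub_cancel_left]
    have hfn : Measurable (f n) := (StronglyMeasurable.mono (hadapt n) (𝒢.le _)).measurable
    rw [hincr]
    refine (condExp_indep_eq hfn.comap_le (𝒢.le n) ?_ (hindep n)).trans ?_
    · exact ((measurable_iff_comap_le.2 le_rfl).sub_const _).stronglyMeasurable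
    · simp only [integral_sub (hint n) (integrable_const _), integral_const, probReal_univ,
        smul_eq_mul, one_mul, sub_self]
      rfl

theorem integrable_sum_range_stoppingTime {τ : Ω → ℕ}
    (hτ : IsStoppingTime 𝒢 (fun ω => (τ ω : ℕ∞))) (hint : ∀ n, Integrable (f n) μ) {N : ℕ}
    (hbdd : ∀ ω, τ ω ≤ N) : Integrable (fun ω => ∑ k ∈ Finset.range (τ ω), f k ω) μ :=
  integrable_stoppedValue ℕ hτ (fun _ => integrable_finsetSum _ fun k _ => hint k) (N := N)
    fun ω => WithTop.coe_le_coe.mpr (hbdd ω)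

theorem integral_sum_range_stoppingTime [IsProbabilityMeasure μ] {c : ℝ}
    (hadapt : ∀ n, StronglyMeasurable[𝒢 (n + 1)] (f n))
    (hindep : ∀ n, Indep (MeasurableSpace.comap (f n) inferInstance) (𝒢 n) μ)
    (hint : ∀ n, Integrable (f n) μ) (hmean : ∀ n, μ[f n] = c)
    {τ : Ω → ℕ} (hτ : IsStoppingTime 𝒢 (fun ω => (τ ω : ℕ∞))) {N : ℕ} (hbdd : ∀ ω, τ ω ≤ N) :
    ∫ ω, ∑ k ∈ Finset.range (τ ω), f k ω ∂μ = c * ∫ ω, (τ ω : ℝ) ∂μ := by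
  have hbdd' : ∀ ω, (τ ω : ℕ∞) ≤ N := fun ω => by exact_mod_cast hbdd ω
  have hτint : Integrable (fun ω => (τ ω : ℝ)) μ :=
    integrable_stoppedValue ℕ hτ (u := fun n _ => (n : ℝ)) (fun _ => integrable_const _) hbdd'
  have hM :=
    (martingale_sum_range_sub_integral hadapt hindep hint).integral_stoppedValue_eq hτ hbdd'
  simp only [stoppedValue, untopD_coe_enat, hmean, Finset.sum_sub_distrib, Finset.sum_const,
    Finset.card_range, nsmul_eq_mul, Finset.range_zero, Finset.sum_empty, Finset.card_empty,
    Nat.cast_zero, zero_mul, sub_self, integral_zero] at hM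
  rw [integral_sub (integrable_sum_range_stoppingTime hτ hint hbdd) (hτint.mul_const c),
    integral_mul_const, sub_eq_zero] at hM
  rw [hM, mul_comm]

end OptionalStopping

section HittingTime

variable {Ω β : Type*}

theorem sInf_union_singleton_eq_hittingBtwn (u : ℕ → Ω → β) (s : Set β) (n m : ℕ) (ω : Ω) :
    sInf ({i | n ≤ i ∧ u i ω ∈ s} ∪ {m}) = hittingBtwn u s n m ω := by
  refine le_antisymm (Nat.sInf_le ?_) ?_
  · by_cases hhit : ∃ j ∈ Set.Icc n m, u j ω ∈ s
    · exact .inl ⟨le_hittingBtwn_of_exists hhit, hittingBtwn_mem_set hhit⟩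
    · exact .inr (hittingBtwn_eq_end_iff.mpr fun h => absurd h hhit)
  · obtain ⟨hn, hs⟩ | hm := Nat.sInf_mem (s := {i | n ≤ i ∧ u i ω ∈ s} ∪ {m}) ⟨m, .inr rfl⟩
    · exact hittingBtwn_le_of_mem hn (Nat.sInf_le (.inr rfl)) hs
    · rw [hm]
      exact hittingBtwn_le ω

theorem apply_hittingBtwn_Ici_le_add {u : ℕ → Ω → ℝ} {γ B : ℝ} {N : ℕ} {ω : Ω} (hN : 1 ≤ N)
    (h0 : u 0 ω ≤ γ) (hstep : ∀ k, u (k + 1) ω ≤ u k ω + B) :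
    u (hittingBtwn u (Set.Ici γ) 1 N ω) ω ≤ γ + B := by
  obtain ⟨m, hm⟩ : ∃ m, hittingBtwn u (Set.Ici γ) 1 N ω = m + 1 :=
    Nat.exists_eq_add_one.mpr (le_hittingBtwn hN ω)
  have hbefore : u m ω ≤ γ := by
    rcases Nat.eq_zero_or_pos m with rfl | hpos
    · exact h0
    · exact (not_le.mp (notMem_of_lt_hittingBtwn (hm.symm ▸ m.lt_add_one) hpos)).le
  rw [hm]
  linarith [hstep m]

end HittingTime

end MeasureTheory

namespace ProbabilityTheory

variable {Ω : Type*} {mΩ : MeasurableSpace Ω} {μ : Measure Ω}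

theorem iIndepFun.indep_natural_sum_range {f : ℕ → Ω → ℝ} (hf : iIndepFun f μ)
    (hfm : ∀ n, Measurable (f n))
    (hS : ∀ n, StronglyMeasurable fun ω => ∑ k ∈ Finset.range n, f k ω) (n : ℕ) :
    Indep (MeasurableSpace.comap (f n) inferInstance)
      (Filtration.natural (fun n ω => ∑ k ∈ Finset.range n, f k ω) hS n) μ := by
  have hpast : Filtration.natural (fun n ω => ∑ k ∈ Finset.range n, f k ω) hS n
      ≤ ⨆ k ∈ Set.Iio n, MeasurableSpace.comap (f k) inferInstance := by
    refine iSup₂_le fun j hj => (Finset.measurable_sum _ fun k hk => ?_).comap_le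
    exact Measurable.of_comap_le
      (le_iSup₂_of_le k ((Finset.mem_range.mp hk).trans_le hj) le_rfl)
  have h := indep_iSup_of_disjoint (fun k => (hfm k).comap_le)
    ((iIndepFun_iff_iIndep _ _ _).mp hf) (S := {n}) (T := Set.Iio n) (by simp)
  rw [iSup_singleton] at h
  exact indep_of_indep_of_le_right h hpast

theorem iIndepFun.integral_sum_range_stoppingTime {f : ℕ → Ω → ℝ} {c : ℝ}
    [IsProbabilityMeasure μ] (hf : iIndepFun f μ) (hfm : ∀ n, Measurable (f n))
    (hint : ∀ n, Integrable (f n) μ) (hmean : ∀ n, μ[f n] = c)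
    (hS : ∀ n, StronglyMeasurable fun ω => ∑ k ∈ Finset.range n, f k ω) {τ : Ω → ℕ}
    (hτ : IsStoppingTime (Filtration.natural (fun n ω => ∑ k ∈ Finset.range n, f k ω) hS)
      (fun ω => (τ ω : ℕ∞)))
    {N : ℕ} (hbdd : ∀ ω, τ ω ≤ N) :
    ∫ ω, ∑ k ∈ Finset.range (τ ω), f k ω ∂μ = c * ∫ ω, (τ ω : ℝ) ∂μ := by
  have hS_adapted := Filtration.stronglyAdapted_natural hS
  refine MeasureTheory.integral_sum_range_stoppingTime (fun n => ?_)
    (hf.indep_natural_sum_range hfm hS) hint hmean hτ hbdd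
  have hincr : f n = fun ω =>
      ∑ k ∈ Finset.range (n + 1), f k ω - ∑ k ∈ Finset.range n, f k ω := by
    ext ω
    simp only [Finset.sum_range_succ, add_sub_cancel_left]
  rw [hincr]
  exact (hS_adapted (n + 1)).sub
    (StronglyMeasurable.mono (hS_adapted n) (Filtration.mono _ n.le_succ))

theorem integral_comp_eq_sum_measureReal [IsFiniteMeasure μ] {α : Type*} [Fintype α]
    [MeasurableSpace α] [MeasurableSingletonClass α] {Z : Ω → α} (hZ : Measurable Z)
    (g : α → ℝ) : ∫ ω, g (Z ω) ∂μ = ∑ a, μ.real (Z ⁻¹' {a}) * g a := by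
  rw [← integral_map hZ.aemeasurable (measurable_of_countable g).aestronglyMeasurable,
    integral_fintype .of_finite]
  simp [map_measureReal_apply hZ (measurableSet_singleton _)]

theorem integral_comp_eq_sum_of_measure_eq [IsFiniteMeasure μ] {α β : Type*}
    [Fintype α] [MeasurableSpace α] [MeasurableSingletonClass α]
    [Fintype β] [MeasurableSpace β] [MeasurableSingletonClass β]
    {U : Ω → α} {V : Ω → β} (hU : Measurable U) (hV : Measurable V) {p : α → β → ℝ}
    (hp : ∀ a b, 0 ≤ p a b) (hlaw : ∀ a b, μ {ω | U ω = a ∧ V ω = b} = ENNReal.ofReal (p a b))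
    (g : α → β → ℝ) : ∫ ω, g (U ω) (V ω) ∂μ = ∑ a, ∑ b, p a b * g a b := by
  rw [integral_comp_eq_sum_measureReal (hU.prodMk hV) fun q => g q.1 q.2, Fintype.sum_prod_type]
  refine Finset.sum_congr rfl fun a _ => Finset.sum_congr rfl fun b _ => ?_
  rw [measureReal_def, ← ENNReal.toReal_ofReal (hp a b), ← hlaw]
  simp [Set.preimage, Prod.ext_iff]

end ProbabilityTheory

theorem le_iSup_iSup_abs_of_finite {α β : Type*} [Finite α] [Finite β] (g : α → β → ℝ)
    (a : α) (b : β) : g a b ≤ ⨆ a, ⨆ b, |g a b| :=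
  (le_abs_self _).trans <| le_ciSup_of_le (Set.finite_range _).bddAbove a
    (le_ciSup (f := fun b => |g a b|) (Set.finite_range _).bddAbove b)

theorem stmt8_general {𝒳 𝒴 : Type*} [Fintype 𝒳] [Fintype 𝒴]
    [MeasurableSpace 𝒳] [DiscreteMeasurableSpace 𝒳]
    [MeasurableSpace 𝒴] [DiscreteMeasurableSpace 𝒴]
    (pX : 𝒳 → ℝ) (hpXpos : ∀ x, 0 < pX x)
    (W : 𝒳 → 𝒴 → ℝ) (hWpos : ∀ x y, 0 < W x y)
    (C B : ℝ)
    (hCdef : C = ∑ x, ∑ y, pX x * W x y * infoDen pX W x y)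
    -- `P_{XY} ≠ P_X ⊗ P_Y`, equivalently `C > 0`:
    (hC : 0 < C)
    (hBdef : B = ⨆ x : 𝒳, ⨆ y : 𝒴, |infoDen pX W x y|)
    {Ω : Type*} [MeasurableSpace Ω] (μ : Measure Ω) [IsProbabilityMeasure μ]
    (X : ℕ → Ω → 𝒳) (Y : ℕ → Ω → 𝒴)
    (hXm : ∀ k, Measurable (X k)) (hYm : ∀ k, Measurable (Y k))
    -- `((X_k, Y_k))_k` is an i.i.d. sequence with law `P_{XY}`:
    (hXYindep : iIndepFun (fun k ω => (X k ω, Y k ω)) μ)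
    (hXYlaw : ∀ k x y, μ {ω | X k ω = x ∧ Y k ω = y} = ENNReal.ofReal (pX x * W x y))
    (γ : ℝ) (hγ : 0 ≤ γ) (N : ℕ) (hN : 1 ≤ N) :
    ∫ ω, ((sInf ({n : ℕ | 1 ≤ n ∧
        γ ≤ ∑ k ∈ Finset.range n, infoDen pX W (X k ω) (Y k ω)} ∪ {N}) : ℕ) : ℝ) ∂μ
      ≤ (γ + B) / C := by
  set f : ℕ → Ω → ℝ := fun k ω => infoDen pX W (X k ω) (Y k ω)
  set S : ℕ → Ω → ℝ := fun n ω => ∑ k ∈ Finset.range n, f k ω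
  have hZm k : Measurable fun ω => (X k ω, Y k ω) := (hXm k).prodMk (hYm k)
  have hdens : Measurable fun p : 𝒳 × 𝒴 => infoDen pX W p.1 p.2 := measurable_of_countable _
  have hfm k : Measurable (f k) := hdens.comp (hZm k)
  have hSm n : StronglyMeasurable (S n) :=
    (Finset.measurable_sum _ fun k _ => hfm k).stronglyMeasurable
  have hint k : Integrable (f k) μ :=
    (Integrable.of_finite (f := fun p : 𝒳 × 𝒴 => infoDen pX W p.1 p.2)).comp_measurable (hZm k)
  have hmean k : μ[f k] = C := hCdef ▸ integral_comp_eq_sum_of_measure_eq (hXm k) (hYm k)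
    (fun x y => (mul_pos (hpXpos x) (hWpos x y)).le) (hXYlaw k) (infoDen pX W)
  set τ : Ω → ℕ := hittingBtwn S (Set.Ici γ) 1 N
  have hτ : IsStoppingTime (Filtration.natural S hSm) (fun ω => (τ ω : ℕ∞)) :=
    (Filtration.stronglyAdapted_natural hSm).adapted.isStoppingTime_hittingBtwn measurableSet_Ici
  have hwald : ∫ ω, S (τ ω) ω ∂μ = C * ∫ ω, (τ ω : ℝ) ∂μ :=
    (hXYindep.comp _ fun _ => hdens).integral_sum_range_stoppingTime hfm hint hmean hSm hτ
      hittingBtwn_le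
  have hovershoot ω : S (τ ω) ω ≤ γ + B :=
    apply_hittingBtwn_Ici_le_add hN (by simpa [S] using hγ) fun k => by
      simpa [S, Finset.sum_range_succ, hBdef] using le_iSup_iSup_abs_of_finite (infoDen pX W) _ _
  have hS_le : ∫ ω, S (τ ω) ω ∂μ ≤ γ + B := by
    simpa using integral_mono (integrable_sum_range_stoppingTime hτ hint hittingBtwn_le)
      (integrable_const (γ + B)) hovershoot
  calc _ = ∫ ω, (τ ω : ℝ) ∂μ := by
        congr with ω
        exact congrArg _ (sInf_union_singleton_eq_hittingBtwn S (Set.Ici γ) 1 N ω)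
    _ ≤ (γ + B) / C := by
        rw [le_div_iff₀ hC]
        linarith

/-- For every real `γ ≥ 0` and integer `N ≥ 1`, the truncated hitting
time `τ' = min(inf{n ≥ 1 : Sₙ ≥ γ}, N)` satisfies `E[τ'] ≤ (γ + B)/C`, where
`C = E[i(X₁;Y₁)] > 0` and `B = max_{x,y} |i(x;y)|`. -/
theorem stmt8 {𝒳 𝒴 : Type*} [Fintype 𝒳] [Nonempty 𝒳] [Fintype 𝒴] [Nonempty 𝒴]
    [MeasurableSpace 𝒳] [DiscreteMeasurableSpace 𝒳]
    [MeasurableSpace 𝒴] [DiscreteMeasurableSpace 𝒴]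
    (pX : 𝒳 → ℝ) (hpXpos : ∀ x, 0 < pX x) (hpXsum : ∑ x, pX x = 1)
    (W : 𝒳 → 𝒴 → ℝ) (hWpos : ∀ x y, 0 < W x y) (hWsum : ∀ x, ∑ y, W x y = 1)
    (C B : ℝ)
    (hCdef : C = ∑ x, ∑ y, pX x * W x y * infoDen pX W x y)
    -- `P_{XY} ≠ P_X ⊗ P_Y`, equivalently `C > 0`:
    (hC : 0 < C)
    (hBdef : B = ⨆ x : 𝒳, ⨆ y : 𝒴, |infoDen pX W x y|)
    {Ω : Type*} [MeasurableSpace Ω] (μ : Measure Ω) [IsProbabilityMeasure μ]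
    (X : ℕ → Ω → 𝒳) (Y : ℕ → Ω → 𝒴)
    (hXm : ∀ k, Measurable (X k)) (hYm : ∀ k, Measurable (Y k))
    -- `((X_k, Y_k))_k` is an i.i.d. sequence with law `P_{XY}`:
    (hXYindep : iIndepFun (fun k ω => (X k ω, Y k ω)) μ)
    (hXYlaw : ∀ k x y, μ {ω | X k ω = x ∧ Y k ω = y} = ENNReal.ofReal (pX x * W x y))
    (γ : ℝ) (hγ : 0 ≤ γ) (N : ℕ) (hN : 1 ≤ N) :
    ∫ ω, ((sInf ({n : ℕ | 1 ≤ n ∧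
        γ ≤ ∑ k ∈ Finset.range n, infoDen pX W (X k ω) (Y k ω)} ∪ {N}) : ℕ) : ℝ) ∂μ
      ≤ (γ + B) / C :=
  stmt8_general pX hpXpos W hWpos C B hCdef hC hBdef μ X Y hXm hYm hXYindep hXYlaw γ hγ N hN
end
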